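/- Let c ∈ ℂ, R₀ := max(2, 2|c|), and fix R > R₀. Define w(z) := Σ_{n=1}^{∞} n·c^{n−1}·z^{−n}·φ_n(z) for |z| > R₀, where φ_n(z) := Σ_{m=0}^{∞} [(2m+n−1)!/(m!·(m+n)!)]·z^{−2m}; define s_0 := 1, s_{2k} := (2k)!·Σ_{j=0}^{k} [(2j+1)/((k−j)!·(k+j+1)!)]·c^{2j} (k ≥ 1), s_{2k−1} := (2k−1)!·Σ_{j=1}^{k} [2j/((k−j)!·(k+j)!)]·c^{2j−1} (k ≥ 1). Then the series g(z) := (1/R²)·Σ_{j=0}^{∞} conj(s_{j+1})·(z/R²)^j converges for all |z| < R²/R₀, defines an analytic function on the open disk {z : |z| < R²/R₀} (note R²/R₀ > R), and satisfies, for 0 < |z| < R²/R₀: g(z) = (R²/z²)·conj( w( R²/conj(z) ) ) − 1/z. -/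

import Mathlib

/-- The auxiliary function `φ_n(z) = Σ_{m=0}^∞ (2m+n-1)!/(m!(m+n)!) · z^{-2m}` (for `|z| > 2`). -/
noncomputable def phiFun (n : ℕ) (z : ℂ) : ℂ :=
  ∑' m : ℕ, ((2 * m + n - 1).factorial : ℂ) /
    ((m.factorial : ℂ) * ((m + n).factorial : ℂ)) * (z ^ (2 * m))⁻¹

/-- The complex weight `w(z) = Σ_{n=1}^∞ n·c^{n-1}·z^{-n}·φ_n(z)` (for `|z| > max(2, 2|c|)`),
written here with the summation index shifted to start at `0`. -/
noncomputable def wFun (c : ℂ) (z : ℂ) : ℂ :=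
  ∑' n : ℕ, ((n + 1 : ℕ) : ℂ) * c ^ n * (z ^ (n + 1))⁻¹ * phiFun (n + 1) z

/-- The moment sequence: `s_0 = 1`,
`s_{2k} = (2k)! Σ_{j=0}^{k} (2j+1)/((k-j)!(k+j+1)!) c^{2j}` and
`s_{2k-1} = (2k-1)! Σ_{j=1}^{k} 2j/((k-j)!(k+j)!) c^{2j-1}`. -/
noncomputable def sMom (c : ℂ) (k : ℕ) : ℂ :=
  if Even k then
    ((k.factorial : ℂ)) * ∑ j ∈ Finset.range (k / 2 + 1),
      ((2 * j + 1 : ℕ) : ℂ) /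
        (((k / 2 - j).factorial : ℂ) * ((k / 2 + j + 1).factorial : ℂ)) * c ^ (2 * j)
  else
    ((k.factorial : ℂ)) * ∑ j ∈ Finset.Icc 1 ((k + 1) / 2),
      ((2 * j : ℕ) : ℂ) /
        ((((k + 1) / 2 - j).factorial : ℂ) * (((k + 1) / 2 + j).factorial : ℂ)) * c ^ (2 * j - 1)

/-- The correction function `g(z) = (1/R²) Σ_{j=0}^∞ conj(s_{j+1}) (z/R²)^j`. -/
noncomputable def gFun (c : ℂ) (R : ℝ) (z : ℂ) : ℂ :=
  (1 / (R : ℂ) ^ 2) * ∑' j : ℕ, (starRingEnd ℂ) (sMom c (j + 1)) * (z / (R : ℂ) ^ 2) ^ j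

/-!
Expanding each `φ_n` turns `w(ζ)` into a double series over `(n, m)` whose terms are multiples of
`ζ^{-(n+2m+1)}`; the bound `(2m+n)!/(m!(m+n+1)!) ≤ 2^{2m+n}` makes it absolutely convergent for
`|ζ| > R₀`, and collecting the terms with `n + 2m = k` gives `w(ζ) = Σ_k s_k ζ^{-(k+1)}`.
With `u = z/R²` and `ζ = 1/conj u = R²/conj z`, conjugation turns this into
`conj w(ζ) = Σ_k conj(s_k) u^{k+1}`, whose `k = 0` term is `u` because `s_0 = 1`; dividing the
rest by `u²` gives the series of `g`, hence the representation. That series converges at every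
`u` with `|u| < 1/R₀`, so its radius of convergence is at least `1/R₀` and `g` is analytic there.
-/

open Finset Nat

theorem Nat.factorial_add_le_two_pow_mul (m n : ℕ) : (m + n)! ≤ 2 ^ (m + n) * (m ! * n !) := by
  rw [← Nat.add_choose_mul_factorial_mul_factorial, mul_assoc]
  exact Nat.mul_le_mul_right _ (Nat.choose_le_two_pow _ _)

theorem differentiableOn_tsum_mul_pow {𝕜 : Type*} [RCLike 𝕜] {a : ℕ → 𝕜} {r : ℝ}
    (h : ∀ u : 𝕜, ‖u‖ < r → Summable fun j => a j * u ^ j) :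
    DifferentiableOn 𝕜 (fun u => ∑' j, a j * u ^ j) (Metric.ball 0 r) := by
  set p := FormalMultilinearSeries.ofScalars 𝕜 a
  have hr : ENNReal.ofReal r ≤ p.radius := by
    refine ENNReal.le_of_forall_nnreal_lt fun t ht => p.le_radius_of_tendsto (l := 0) ?_
    have ht' : ‖((t : ℝ) : 𝕜)‖ < r := by
      rw [RCLike.norm_ofReal, NNReal.abs_eq]
      exact ENNReal.coe_lt_ofReal.1 ht
    simpa [p, FormalMultilinearSeries.ofScalars_norm] using
      (h _ ht').tendsto_atTop_zero.norm
  have hsum : p.sum = fun u => ∑' j, a j * u ^ j :=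
    funext fun u => (FormalMultilinearSeries.ofScalars_sum_eq a u).trans (by simp)
  rw [← hsum, ← Metric.eball_ofReal]
  exact (p.analyticOnNhd.mono (Metric.eball_subset_eball hr)).differentiableOn

theorem sMom_eq_sum_range (c : ℂ) (k : ℕ) :
    sMom c k = ∑ m ∈ range (k / 2 + 1),
      ((k - 2 * m + 1 : ℕ) : ℂ) * c ^ (k - 2 * m) *
        ((k ! : ℂ) / ((m ! : ℂ) * ((k - m + 1)! : ℂ))) := by
  rw [← sum_range_reflect]
  rcases Nat.even_or_odd' k with ⟨K, rfl | rfl⟩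
  · have hK : 2 * K / 2 = K := by omega
    rw [sMom, if_pos (even_two_mul K), hK, mul_sum]
    refine sum_congr rfl fun j hj => ?_
    have hj : j ≤ K := Nat.lt_succ_iff.mp (mem_range.mp hj)
    rw [show K + 1 - 1 - j = K - j by omega, show 2 * K - 2 * (K - j) + 1 = 2 * j + 1 by omega,
      show 2 * K - 2 * (K - j) = 2 * j by omega, show 2 * K - (K - j) + 1 = K + j + 1 by omega]
    ring
  · have hK : (2 * K + 1) / 2 = K := by omega
    have hK' : (2 * K + 1 + 1) / 2 = K + 1 := by omega
    rw [sMom, if_neg (Nat.not_even_two_mul_add_one K), hK, hK', ← Ico_add_one_right_eq_Icc,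
      sum_Ico_eq_sum_range, mul_sum, show K + 1 + 1 - 1 = K + 1 by omega]
    refine sum_congr rfl fun j hj => ?_
    have hj : j ≤ K := Nat.lt_succ_iff.mp (mem_range.mp hj)
    rw [show K + 1 - 1 - j = K - j by omega,
      show 2 * K + 1 - 2 * (K - j) + 1 = 2 * (1 + j) by omega,
      show 2 * K + 1 - 2 * (K - j) = 2 * (1 + j) - 1 by omega,
      show 2 * K + 1 - (K - j) + 1 = K + 1 + (1 + j) by omega,
      show K + 1 - (1 + j) = K - j by omega]
    ring

theorem sMom_zero (c : ℂ) : sMom c 0 = 1 := by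
  simp [sMom]

noncomputable def wTerm (c ζ : ℂ) (p : ℕ × ℕ) : ℂ :=
  ((p.1 + 1 : ℕ) : ℂ) * c ^ p.1 * (ζ ^ (p.1 + 1))⁻¹ *
    (((2 * p.2 + p.1)! : ℂ) / ((p.2 ! : ℂ) * ((p.2 + p.1 + 1)! : ℂ)) * (ζ ^ (2 * p.2))⁻¹)

theorem wFun_eq_tsum_tsum_wTerm (c ζ : ℂ) : wFun c ζ = ∑' n, ∑' m, wTerm c ζ (n, m) := by
  refine tsum_congr fun n => ?_
  rw [phiFun, ← tsum_mul_left]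
  refine tsum_congr fun m => ?_
  rw [wTerm, show 2 * m + (n + 1) - 1 = 2 * m + n by omega, ← add_assoc]

theorem norm_wTerm_le (c ζ : ℂ) (n m : ℕ) :
    ‖wTerm c ζ (n, m)‖ ≤ ‖ζ‖⁻¹ * ((n + 1) * (2 * ‖c‖ / ‖ζ‖) ^ n) * (4 / ‖ζ‖ ^ 2) ^ m := by
  have hfac : ((2 * m + n)! : ℝ) / ((m ! : ℝ) * ((m + n + 1)! : ℝ)) ≤ 2 ^ n * 4 ^ m := by
    rw [div_le_iff₀ (by positivity)]
    have h := m.factorial_add_le_two_pow_mul (m + n)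
    rw [← add_assoc, ← two_mul,
      show 2 ^ (2 * m + n) = 2 ^ n * 4 ^ m by rw [pow_add, pow_mul]; ring] at h
    exact_mod_cast h.trans (Nat.mul_le_mul_left _ (Nat.mul_le_mul_left _
      (Nat.factorial_le (Nat.le_succ _))))
  have hnorm : ‖wTerm c ζ (n, m)‖ = (n + 1) * ‖c‖ ^ n * (‖ζ‖ ^ (n + 1))⁻¹ *
      (((2 * m + n)! : ℝ) / ((m ! : ℝ) * ((m + n + 1)! : ℝ)) * (‖ζ‖ ^ (2 * m))⁻¹) := by
    simp only [wTerm, norm_mul, norm_div, norm_inv, norm_pow, Complex.norm_natCast]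
    push_cast
    ring
  calc ‖wTerm c ζ (n, m)‖
      ≤ (n + 1) * ‖c‖ ^ n * (‖ζ‖ ^ (n + 1))⁻¹ * (2 ^ n * 4 ^ m * (‖ζ‖ ^ (2 * m))⁻¹) := by
        rw [hnorm]; gcongr
    _ = ‖ζ‖⁻¹ * ((n + 1) * (2 * ‖c‖ / ‖ζ‖) ^ n) * (4 / ‖ζ‖ ^ 2) ^ m := by
        ring

theorem summable_wTerm {c ζ : ℂ} (hζ : max 2 (2 * ‖c‖) < ‖ζ‖) : Summable (wTerm c ζ) := by
  have h2 : 2 < ‖ζ‖ := (le_max_left _ _).trans_lt hζ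
  have hr : 2 * ‖c‖ / ‖ζ‖ < 1 := (div_lt_one (by linarith)).2 ((le_max_right _ _).trans_lt hζ)
  have hq : 4 / ‖ζ‖ ^ 2 < 1 := (div_lt_one (by positivity)).2 (by nlinarith)
  have hu : Summable fun n : ℕ => ‖ζ‖⁻¹ * ((n + 1) * (2 * ‖c‖ / ‖ζ‖) ^ n) := by
    have hr' : ‖2 * ‖c‖ / ‖ζ‖‖ < 1 := by rwa [Real.norm_of_nonneg (by positivity)]
    refine (((summable_pow_mul_geometric_of_norm_lt_one 1 hr').add
      (summable_geometric_of_norm_lt_one hr')).congr fun n => ?_).mul_left _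
    ring
  have hv : Summable fun m : ℕ => (4 / ‖ζ‖ ^ 2) ^ m :=
    summable_geometric_of_lt_one (by positivity) hq
  refine .of_norm_bounded (hu.mul_of_nonneg hv (fun _ => by positivity) fun _ => by positivity) ?_
  rintro ⟨n, m⟩
  exact norm_wTerm_le c ζ n m

def sigmaFinEquivProd : (Σ k : ℕ, Fin (k / 2 + 1)) ≃ ℕ × ℕ where
  toFun σ := (σ.1 - 2 * σ.2, σ.2)
  invFun p := ⟨p.1 + 2 * p.2, ⟨p.2, by omega⟩⟩
  left_inv := by
    rintro ⟨k, m, hm⟩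
    have hk : k - 2 * m + 2 * m = k := by omega
    exact Sigma.ext hk ((Fin.heq_ext_iff (by dsimp only; rw [hk])).2 rfl)
  right_inv := by
    rintro ⟨n, m⟩
    simp

theorem sum_range_wTerm (c ζ : ℂ) (k : ℕ) :
    ∑ m ∈ range (k / 2 + 1), wTerm c ζ (k - 2 * m, m) = sMom c k * (ζ ^ (k + 1))⁻¹ := by
  rw [sMom_eq_sum_range, sum_mul]
  refine sum_congr rfl fun m hm => ?_
  have hm : 2 * m ≤ k := by have := mem_range.mp hm; omega
  rw [wTerm, show 2 * m + (k - 2 * m) = k by omega, show m + (k - 2 * m) + 1 = k - m + 1 by omega,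
    show k + 1 = (k - 2 * m + 1) + 2 * m by omega, pow_add, mul_inv]
  ring

theorem hasSum_sMom_mul_inv_pow {c ζ : ℂ} (hζ : max 2 (2 * ‖c‖) < ‖ζ‖) :
    HasSum (fun k => sMom c k * (ζ ^ (k + 1))⁻¹) (wFun c ζ) := by
  have h := summable_wTerm hζ
  have hprod : HasSum (wTerm c ζ) (wFun c ζ) := by
    rw [wFun_eq_tsum_tsum_wTerm, ← h.tsum_prod]
    exact h.hasSum
  refine (sigmaFinEquivProd.hasSum_iff.2 hprod).sigma fun k => ?_
  convert hasSum_fintype _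
  rw [← sum_range_wTerm, ← Fin.sum_univ_eq_sum_range]
  rfl

open ComplexConjugate

theorem hasSum_conj_sMom_succ_mul_pow {c u : ℂ} (hu0 : u ≠ 0)
    (hu : ‖u‖ < (max 2 (2 * ‖c‖))⁻¹) :
    HasSum (fun j => conj (sMom c (j + 1)) * u ^ j) ((conj (wFun c (conj u)⁻¹) - u) / u ^ 2) := by
  have hζ : max 2 (2 * ‖c‖) < ‖(conj u)⁻¹‖ := by
    rw [norm_inv, Complex.norm_conj]
    exact (lt_inv_comm₀ (norm_pos_iff.2 hu0) (lt_max_of_lt_left two_pos)).1 hu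
  have h := Complex.hasSum_conj'.2 (hasSum_sMom_mul_inv_pow hζ)
  simp only [map_mul, map_pow, Complex.conj_conj, inv_pow, inv_inv] at h
  have h' := ((hasSum_nat_add_iff' 1).2 h).div_const (u ^ 2)
  rw [sum_range_one, sMom_zero, map_one, one_mul, zero_add, pow_one] at h'
  have hterm (j : ℕ) :
      conj (sMom c (j + 1)) * u ^ (j + 1 + 1) / u ^ 2 = conj (sMom c (j + 1)) * u ^ j := by
    field_simp
    ring
  simpa only [hterm] using h'

theorem summable_conj_sMom_succ_mul_pow (c : ℂ) {u : ℂ} (hu : ‖u‖ < (max 2 (2 * ‖c‖))⁻¹) :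
    Summable fun j => conj (sMom c (j + 1)) * u ^ j := by
  rcases eq_or_ne u 0 with rfl | hu0
  · exact summable_of_ne_finset_zero (s := {0}) fun j hj => by simp_all
  · exact (hasSum_conj_sMom_succ_mul_pow hu0 hu).summable

/-- **The correction function `g`:** its defining series converges on the disk
`|z| < R²/R₀` (where `R₀ = max(2, 2|c|) < R`, so `R²/R₀ > R`), `g` is analytic there, and
`g(z) = (R²/z²)·conj(w(R²/conj z)) - 1/z` for `0 < |z| < R²/R₀`. -/
theorem gFun_convergence_analytic_and_representation
    (c : ℂ) (R : ℝ) (hR : max 2 (2 * ‖c‖) < R) :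
    R < R ^ 2 / max 2 (2 * ‖c‖) ∧
    (∀ z : ℂ, ‖z‖ < R ^ 2 / max 2 (2 * ‖c‖) →
      Summable fun j : ℕ => (starRingEnd ℂ) (sMom c (j + 1)) * (z / (R : ℂ) ^ 2) ^ j) ∧
    DifferentiableOn ℂ (gFun c R)
      {z : ℂ | ‖z‖ < R ^ 2 / max 2 (2 * ‖c‖)} ∧
    (∀ z : ℂ, z ≠ 0 → ‖z‖ < R ^ 2 / max 2 (2 * ‖c‖) →
      gFun c R z = ((R : ℂ) ^ 2 / z ^ 2) *
          (starRingEnd ℂ) (wFun c ((R : ℂ) ^ 2 / (starRingEnd ℂ) z)) - 1 / z) := by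
  set M := max 2 (2 * ‖c‖)
  have hM : 0 < M := lt_max_of_lt_left two_pos
  have hR0 : 0 < R := hM.trans hR
  have hRc : (R : ℂ) ≠ 0 := Complex.ofReal_ne_zero.2 hR0.ne'
  have hscale (z : ℂ) (hz : ‖z‖ < R ^ 2 / M) : ‖z / (R : ℂ) ^ 2‖ < M⁻¹ := by
    rwa [norm_div, norm_pow, Complex.norm_real, Real.norm_of_nonneg hR0.le,
      div_lt_iff₀ (by positivity), ← div_eq_inv_mul]
  refine ⟨by rw [lt_div_iff₀ hM]; nlinarith,
    fun z hz => summable_conj_sMom_succ_mul_pow c (hscale z hz), ?_, fun z hz0 hz => ?_⟩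
  · have hG := differentiableOn_tsum_mul_pow fun u (hu : ‖u‖ < M⁻¹) =>
      summable_conj_sMom_succ_mul_pow c hu
    exact (differentiableOn_const _).mul (hG.comp (differentiableOn_id.div_const _)
      fun z hz => mem_ball_zero_iff.2 (hscale z hz))
  · have hinv : (conj (z / (R : ℂ) ^ 2))⁻¹ = (R : ℂ) ^ 2 / conj z := by
      rw [map_div₀, map_pow, Complex.conj_ofReal, inv_div]
    rw [gFun, (hasSum_conj_sMom_succ_mul_pow (div_ne_zero hz0 (pow_ne_zero 2 hRc))
      (hscale z hz)).tsum_eq, hinv]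
    field_simp
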